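/- arXiv:2309.04569 — 3 statements merged into one kernel-verified Lean document; each statement's English description precedes it below -/
import Mathlib

section
/- Suppose i₀ ∈ E is an elliptic index, and φ is an automorphism of G which preserves the conjugacy classes of the elliptic factors and maps the subgroup of G generated by all the factors G_j with j ≠ i₀ into itself. Then for every g ∈ G_{i₀}, the normal form of φ(ι_{i₀}(g)) contains at most one letter from G_{i₀}. -/
/-!
Let `H` be the subgroup generated by the factors other than `G i₀`; its elements have no letter
from `G i₀`. By hypothesis `φ (G i₀) ⊆ x G i₀ x⁻¹` and `φ H ⊆ H`, so, `φ` being onto,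
`⟨H, x G i₀ x⁻¹⟩` contains `G i₀`. Write `x = h y a` with `h ∈ H`, `a ∈ G i₀` and `y` either
trivial or a reduced word beginning in `G i₀` and ending outside it. In the second case the
alternating products `h₀ (y b₁ y⁻¹) h₁ (y b₂ y⁻¹) ⋯` are reduced as written, and they form a
set stable under left multiplication by `H` and by `y G i₀ y⁻¹`. So every element of
`⟨H, y G i₀ y⁻¹⟩ ⊇ ⟨H, x G i₀ x⁻¹⟩` lies in `H` or has a reduced word of length at least two,
which no nontrivial element of `G i₀` does. Hence `x = h a`, and the image of any `g ∈ G i₀`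
is `h (a g' a⁻¹) h⁻¹`, whose reduced word has at most one letter from `G i₀`.
-/

open Monoid

/-- The number of letters from the factor `G i` in the normal form (reduced word)
of an element `g` of the free product `⋆ᵢ G i`. -/
noncomputable def lettersFrom {ι : Type*} [DecidableEq ι] {G : ι → Type*}
    [∀ i, Group (G i)] [∀ i, DecidableEq (G i)] (i : ι) (g : CoprodI G) : ℕ :=
  ((CoprodI.Word.equiv g).toList.filter (fun p => decide (p.1 = i))).length

namespace Monoid.CoprodI

open Word

section Monoid

variable {ι : Type*} {M : ι → Type*} [∀ i, Monoid (M i)]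

namespace Word

def append (u v : Word M) (h : ∀ a ∈ u.toList.getLast?, ∀ b ∈ v.toList.head?, a.1 ≠ b.1) :
    Word M where
  toList := u.toList ++ v.toList
  ne_one l hl := (List.mem_append.1 hl).elim (u.ne_one l) (v.ne_one l)
  chain_ne := u.chain_ne.append v.chain_ne h

@[simp]
theorem prod_append (u v : Word M) (h) : (u.append v h).prod = u.prod * v.prod := by
  simp [append, prod]

theorem exists_prod_eq_mul_of_toList_eq_append {w : Word M} {l₁ l₂ : List (Σ i, M i)}
    (h : w.toList = l₁ ++ l₂) :
    ∃ w₁ w₂ : Word M,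
      w₁.toList = l₁ ∧ w₂.toList = l₂ ∧ w.prod = w₁.prod * w₂.prod := by
  have hne := w.ne_one
  have hch := w.chain_ne
  rw [h] at hne hch
  refine ⟨⟨l₁, fun l hl => hne l (List.mem_append_left _ hl), hch.left_of_append⟩,
    ⟨l₂, fun l hl => hne l (List.mem_append_right _ hl), hch.right_of_append⟩, rfl, rfl, ?_⟩
  simp [prod, h]

end Word

theorem NeWord.head_ne_one {i j : ι} (w : NeWord M i j) : w.head ≠ 1 :=
  w.toWord.ne_one ⟨i, w.head⟩ (List.mem_of_mem_head? w.toList_head?)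

variable [DecidableEq ι] [∀ i, DecidableEq (M i)]

namespace Word

@[simp]
theorem equiv_prod (w : Word M) : equiv w.prod = w := equiv.apply_symm_apply w

@[simp]
theorem prod_equiv (g : CoprodI M) : (equiv g).prod = g := equiv.symm_apply_apply g

theorem toList_equiv_eq_nil {g : CoprodI M} : (equiv g).toList = [] ↔ g = 1 := by
  refine ⟨fun h => ?_, fun h => by simp [h, equiv, empty]⟩
  rw [← prod_equiv g, show equiv g = empty from Word.ext h, prod_empty]

theorem toList_equiv_mul {g g' : CoprodI M}
    (h : ∀ a ∈ (equiv g).toList.getLast?, ∀ b ∈ (equiv g').toList.head?, a.1 ≠ b.1) :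
    (equiv (g * g')).toList = (equiv g).toList ++ (equiv g').toList := by
  conv_lhs => rw [← prod_equiv g, ← prod_equiv g', ← prod_append _ _ h, equiv_prod]
  rfl

end Word

theorem NeWord.toList_equiv_prod {i j : ι} (w : NeWord M i j) :
    (equiv w.prod).toList = w.toList := by
  rw [NeWord.prod, equiv_prod]
  rfl

theorem toList_equiv_of {i : ι} {m : M i} (hm : m ≠ 1) :
    (equiv (of m)).toList = [⟨i, m⟩] := by
  rw [← NeWord.prod_singleton m hm, NeWord.toList_equiv_prod]
  rfl

theorem toList_equiv_mul_prod_mul {i j : ι} (w : NeWord M i j) {g g' : CoprodI M}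
    (hg : ∀ a ∈ (equiv g).toList.getLast?, a.1 ≠ i) (hg' : (equiv g').fstIdx ≠ some j) :
    (equiv (g * w.prod * g')).toList = (equiv g).toList ++ w.toList ++ (equiv g').toList := by
  have h₁ : (equiv (g * w.prod)).toList = (equiv g).toList ++ w.toList := by
    rw [toList_equiv_mul, w.toList_equiv_prod]
    simpa [w.toList_equiv_prod] using hg
  rw [toList_equiv_mul, h₁]
  rw [h₁, List.getLast?_append_of_ne_nil _ w.toList_ne_nil, NeWord.toList_getLast?]
  simpa using fstIdx_ne_iff.1 hg'

end Monoid

section Group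

variable {ι : Type*} [DecidableEq ι] {G : ι → Type*} [∀ i, Group (G i)]
  [∀ i, DecidableEq (G i)]

theorem fst_mem_of_mem_iSup_range {S : Set ι} {g : CoprodI G}
    (hg : g ∈ ⨆ j ∈ S, (of : G j →* CoprodI G).range) :
    ∀ p ∈ (equiv g).toList, p.1 ∈ S := by
  suffices ∀ w : Word G, (∀ p ∈ w.toList, p.1 ∈ S) → ∀ p ∈ (g • w).toList, p.1 ∈ S from
    this empty (by simp [empty])
  rw [iSup_subtype'] at hg
  refine Subgroup.iSup_induction _
    (C := fun g => ∀ w : Word G, (∀ p ∈ w.toList, p.1 ∈ S) → ∀ p ∈ (g • w).toList, p.1 ∈ S)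
    hg (fun j x hx => ?_) (by simp) fun x y hx hy w hw => ?_
  · obtain ⟨m, rfl⟩ := hx
    rintro w hw ⟨i, m'⟩ hp
    rcases mem_smul_iff.1 hp with ⟨-, hp⟩ | ⟨-, rfl, -⟩
    exacts [hw _ hp, j.2]
  · simpa [mul_smul] using hx _ (hy w hw)

section PingPong

variable (i₀ : ι) (H : Subgroup (CoprodI G)) (y : CoprodI G)

inductive AlternatingProd : CoprodI G → Prop
  | of_mem {h : CoprodI G} : h ∈ H → AlternatingProd h
  | mul {h g : CoprodI G} {b : G i₀} : h ∈ H → b ≠ 1 → (equiv g).fstIdx ≠ some i₀ →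
      AlternatingProd g → AlternatingProd (h * (y * of b * y⁻¹) * g)

variable {i₀ H y}

theorem AlternatingProd.mul_left {h g : CoprodI G} (hh : h ∈ H)
    (hg : AlternatingProd i₀ H y g) : AlternatingProd i₀ H y (h * g) := by
  cases hg with
  | of_mem hg => exact .of_mem (H.mul_mem hh hg)
  | mul hh' hb hg' hg =>
    rw [← mul_assoc, ← mul_assoc]
    exact .mul (H.mul_mem hh hh') hb hg' hg

variable (hH : ∀ h ∈ H, ∀ p ∈ (equiv h).toList, p.1 ≠ i₀) {j : ι} (hj : j ≠ i₀)
  (w : NeWord G i₀ j)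

include hH in
theorem fstIdx_equiv_ne_of_mem {h : CoprodI G} (hh : h ∈ H) : (equiv h).fstIdx ≠ some i₀ :=
  fstIdx_ne_iff.2 fun p hp => (hH h hh p (List.mem_of_mem_head? hp)).symm

include hH hj in
theorem toList_equiv_mul_conj_mul {h g : CoprodI G} {b : G i₀} (hh : h ∈ H) (hb : b ≠ 1)
    (hg : (equiv g).fstIdx ≠ some i₀) :
    (equiv (h * (w.prod * of b * w.prod⁻¹) * g)).toList =
      (equiv h).toList ++ (w.toList ++ ⟨i₀, b⟩ :: w.inv.toList) ++ (equiv g).toList := by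
  have := toList_equiv_mul_prod_mul ((w.append hj (.singleton b hb)).append hj.symm w.inv)
    (fun a ha => hH h hh a (List.mem_of_mem_getLast? ha)) hg
  simpa [NeWord.append_prod, NeWord.prod_singleton, NeWord.inv_prod, mul_assoc] using this

include hH hj in
theorem AlternatingProd.conj_mul {g : CoprodI G} (hg : AlternatingProd i₀ H w.prod g)
    (c : G i₀) :
    AlternatingProd i₀ H w.prod (w.prod * of c * w.prod⁻¹ * g) := by
  by_cases hc : c = 1
  · simpa [hc] using hg
  cases hg with
  | of_mem hh =>
    simpa using AlternatingProd.mul H.one_mem hc (fstIdx_equiv_ne_of_mem hH hh) (.of_mem hh)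
  | @mul h g b hh hb hg' hg =>
    by_cases h1 : h = 1
    · subst h1
      by_cases hcb : c * b = 1
      · convert hg using 1
        rw [eq_inv_of_mul_eq_one_left hcb, map_inv]
        group
      · convert AlternatingProd.mul H.one_mem hcb hg' hg using 1
        simp only [map_mul]
        group
    · have hfst : (equiv (h * (w.prod * of b * w.prod⁻¹) * g)).fstIdx ≠ some i₀ := by
        rw [fstIdx, toList_equiv_mul_conj_mul hH hj w hh hb hg', List.append_assoc,
          List.head?_append_of_ne_nil _ (by rwa [Ne, toList_equiv_eq_nil])]
        exact fstIdx_equiv_ne_of_mem hH hh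
      simpa using AlternatingProd.mul H.one_mem hc hfst (.mul hh hb hg' hg)

include hH hj in
theorem AlternatingProd.mem_or_two_le_length {g : CoprodI G}
    (hg : AlternatingProd i₀ H w.prod g) :
    g ∈ H ∨ 2 ≤ (equiv g).toList.length := by
  cases hg with
  | of_mem hh => exact .inl hh
  | mul hh hb hg' _ =>
    right
    rw [toList_equiv_mul_conj_mul hH hj w hh hb hg']
    have := List.length_pos_of_ne_nil w.toList_ne_nil
    simp only [List.length_append, List.length_cons]
    omega

include hH hj in
theorem alternatingProd_of_mem_closure {k : CoprodI G}
    (hk : k ∈ Subgroup.closure (Set.range (fun b : G i₀ => w.prod * of b * w.prod⁻¹) ∪ H)) :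
    AlternatingProd i₀ H w.prod k := by
  induction hk using Subgroup.closure_induction_left with
  | one => exact .of_mem H.one_mem
  | mul_left x hx k _ ih =>
    rcases hx with ⟨b, rfl⟩ | hx
    exacts [ih.conj_mul hH hj w b, ih.mul_left hx]
  | inv_mul_cancel x hx k _ ih =>
    rcases hx with ⟨b, rfl⟩ | hx
    · simpa [mul_assoc] using ih.conj_mul hH hj w b⁻¹
    · exact ih.mul_left (H.inv_mem hx)

include hH hj in
theorem of_notMem_closure_conj_union {c : G i₀} (hc : c ≠ 1) :
    of c ∉ Subgroup.closure (Set.range (fun b : G i₀ => w.prod * of b * w.prod⁻¹) ∪ H) := by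
  intro hmem
  rcases (alternatingProd_of_mem_closure hH hj w hmem).mem_or_two_le_length hH hj w with
    hc' | hlen
  · exact hH _ hc' ⟨i₀, c⟩ (by simp [toList_equiv_of hc]) rfl
  · simp [toList_equiv_of hc] at hlen

include hH in
theorem lettersFrom_mul_of_mul_inv_le_one {u : CoprodI G} (hu : u ∈ H) (c : G i₀) :
    lettersFrom i₀ (u * of c * u⁻¹) ≤ 1 := by
  by_cases hc : c = 1
  · simp [hc, lettersFrom, toList_equiv_eq_nil.2 rfl]
  have hu' : ∀ p ∈ (equiv u).toList.getLast?, p.1 ≠ i₀ :=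
    fun p hp => hH u hu p (List.mem_of_mem_getLast? hp)
  rw [lettersFrom, ← NeWord.prod_singleton c hc,
    toList_equiv_mul_prod_mul _ hu' (fstIdx_equiv_ne_of_mem hH (H.inv_mem hu))]
  have hfree : ∀ g ∈ H, ((equiv g).toList.filter fun p => decide (p.1 = i₀)).length = 0 :=
    fun g hg => by simpa [List.filter_eq_nil_iff] using hH g hg
  simp [List.filter_append, hfree u hu, hfree _ (H.inv_mem hu)]

end PingPong

variable {i₀ : ι} {H : Subgroup (CoprodI G)}

theorem exists_eq_mul_of_or_eq_mul_prod_mul_of (hof : ∀ j ≠ i₀, ∀ m : G j, of m ∈ H)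
    (x : CoprodI G) :
    ∃ h ∈ H, ∃ a : G i₀,
      x = h * of a ∨ ∃ (j : ι) (w : NeWord G i₀ j), j ≠ i₀ ∧ x = h * w.prod * of a := by
  obtain ⟨n, hn⟩ : ∃ n, (equiv x).toList.length = n := ⟨_, rfl⟩
  induction n using Nat.strong_induction_on generalizing x with
  | _ n ih =>
  rcases hx : (equiv x).toList with _ | ⟨⟨i, m⟩, t⟩
  · exact ⟨1, H.one_mem, 1, .inl (by simpa using toList_equiv_eq_nil.1 hx)⟩
  by_cases hi : i = i₀
  swap
  · obtain ⟨w₁, w₂, hw₁, hw₂, hprod⟩ :=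
      exists_prod_eq_mul_of_toList_eq_append (hx.trans (List.singleton_append).symm)
    obtain ⟨h, hh, a, hx'⟩ := ih t.length (by simp [← hn, hx]) w₂.prod (by simp [hw₂])
    have hxm : x = of m * w₂.prod := by rw [← prod_equiv x, hprod]; simp [prod, hw₁]
    refine ⟨of m * h, H.mul_mem (hof i hi m) hh, a, ?_⟩
    rcases hx' with hx' | ⟨j, w, hj, hx'⟩
    · exact .inl (by rw [hxm, hx', mul_assoc])
    · exact .inr ⟨j, w, hj, by rw [hxm, hx', mul_assoc, mul_assoc, mul_assoc]⟩
  subst hi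
  obtain ⟨l, ⟨j, b⟩, hl⟩ :=
    (List.eq_nil_or_concat (⟨i, m⟩ :: t)).resolve_left (List.cons_ne_nil _ _)
  rw [List.concat_eq_append] at hl
  by_cases hj : j = i
  · subst hj
    obtain ⟨w₁, w₂, hw₁, hw₂, hprod⟩ :=
      exists_prod_eq_mul_of_toList_eq_append (hx.trans hl)
    obtain ⟨h, hh, a, hx'⟩ := ih l.length (by simp [← hn, hx, hl]) w₁.prod (by simp [hw₁])
    have hxb : x = w₁.prod * of b := by rw [← prod_equiv x, hprod]; simp [prod, hw₂]
    refine ⟨h, hh, a * b, ?_⟩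
    rcases hx' with hx' | ⟨j, w, hj, hx'⟩
    · exact .inl (by rw [hxb, hx', map_mul, mul_assoc])
    · exact .inr ⟨j, w, hj, by rw [hxb, hx', map_mul, mul_assoc]⟩
  obtain ⟨i', j', w, hw⟩ := NeWord.of_word (equiv x) fun h => by simp [h, empty] at hx
  have hwl : w.toList = ⟨i, m⟩ :: t := by rw [← hx, ← hw]; rfl
  obtain ⟨rfl, -⟩ : i' = i ∧ _ := by simpa [hwl] using w.toList_head?.symm
  obtain ⟨rfl, -⟩ : j' = j ∧ _ := by simpa [hwl, hl] using w.toList_getLast?.symm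
  exact ⟨1, H.one_mem, 1, .inr ⟨j', w, hj, by simp [NeWord.prod, hw]⟩⟩

theorem exists_mem_eq_mul_of_of_mem_closure
    (hH : ∀ h ∈ H, ∀ p ∈ (equiv h).toList, p.1 ≠ i₀) (hof : ∀ j ≠ i₀, ∀ m : G j, of m ∈ H)
    {x : CoprodI G}
    (hx : ∀ c : G i₀,
      of c ∈ Subgroup.closure (Set.range (fun b : G i₀ => x * of b * x⁻¹) ∪ H)) :
    ∃ u ∈ H, ∃ k : G i₀, x = u * of k := by
  obtain ⟨h, hh, a, rfl | ⟨j, w, hj, rfl⟩⟩ := exists_eq_mul_of_or_eq_mul_prod_mul_of hof x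
  · exact ⟨h, hh, a, rfl⟩
  refine (of_notMem_closure_conj_union hH hj w w.head_ne_one (Subgroup.closure_le _ |>.2 ?_
    (hx w.head))).elim
  rintro _ (⟨b, rfl⟩ | hg)
  · have : h * w.prod * of a * of b * (h * w.prod * of a)⁻¹ =
        h * (w.prod * of (a * b * a⁻¹) * w.prod⁻¹) * h⁻¹ := by
      simp only [map_mul, map_inv]
      group
    dsimp only [SetLike.mem_coe]
    rw [this]
    exact mul_mem (mul_mem (Subgroup.subset_closure (.inr hh))
      (Subgroup.subset_closure (.inl ⟨_, rfl⟩)))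
      (Subgroup.subset_closure (.inr (H.inv_mem hh)))
  · exact Subgroup.subset_closure (.inr hg)

end Group

end Monoid.CoprodI

open Monoid.CoprodI Monoid.CoprodI.Word in
theorem normal_form_of_image_of_elliptic_letter_general
    {ι : Type*} [DecidableEq ι] {G : ι → Type*}
    [∀ i, Group (G i)] [∀ i, DecidableEq (G i)]
    (E : Set ι)
    (i₀ : ι) (hi₀ : i₀ ∈ E)
    (φ : CoprodI G ≃* CoprodI G)
    (hconj : ∀ i ∈ E, ∃ x : CoprodI G, ∀ g : G i, ∃ h : G i,
        φ (CoprodI.of g) = x * CoprodI.of h * x⁻¹)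
    (hinv : ∀ w ∈ (⨆ j ∈ {j : ι | j ≠ i₀},
        (CoprodI.of : G j →* CoprodI G).range),
        φ w ∈ (⨆ j ∈ {j : ι | j ≠ i₀},
        (CoprodI.of : G j →* CoprodI G).range)) :
    ∀ g : G i₀, lettersFrom i₀ (φ (CoprodI.of g)) ≤ 1 := by
  set H := ⨆ j ∈ {j : ι | j ≠ i₀}, (CoprodI.of : G j →* CoprodI G).range
  have hH : ∀ h ∈ H, ∀ p ∈ (equiv h).toList, p.1 ≠ i₀ := fun _ => fst_mem_of_mem_iSup_range
  have hof : ∀ j ≠ i₀, ∀ m : G j, of m ∈ H := fun j hj m =>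
    Subgroup.mem_iSup_of_mem j (Subgroup.mem_iSup_of_mem hj ⟨m, rfl⟩)
  obtain ⟨x, hx⟩ := hconj i₀ hi₀
  have hφ (z : CoprodI G) :
      φ z ∈ Subgroup.closure (Set.range (fun b : G i₀ => x * of b * x⁻¹) ∪ H) := by
    induction z using CoprodI.induction_on with
    | one => simp
    | @of i m =>
      obtain rfl | hi := eq_or_ne i i₀
      · obtain ⟨h, hh⟩ := hx m
        exact Subgroup.subset_closure (.inl ⟨h, hh.symm⟩)
      · exact Subgroup.subset_closure (.inr (hinv _ (hof i hi m)))
    | mul z z' hz hz' => simpa using mul_mem hz hz'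
  obtain ⟨u, hu, k, rfl⟩ :=
    exists_mem_eq_mul_of_of_mem_closure hH hof fun c => by simpa using hφ (φ.symm (of c))
  intro g
  obtain ⟨h, hh⟩ := hx g
  have : u * of k * of h * (u * of k)⁻¹ = u * of (k * h * k⁻¹) * u⁻¹ := by
    simp only [map_mul, map_inv]
    group
  rw [hh, this]
  exact lettersFrom_mul_of_mul_inv_le_one hH hu _

/-- If `φ` is an automorphism of the free product `G = ⋆ᵢ G i` which preserves the
conjugacy classes of the elliptic factors and maps the subgroup generated by all the
factors `G j`, `j ≠ i₀`, into itself, then for every `g ∈ G i₀` the normal form of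
`φ g` contains at most one letter from `G i₀`. -/
theorem normal_form_of_image_of_elliptic_letter
    {ι : Type*} [Fintype ι] [DecidableEq ι] {G : ι → Type*}
    [∀ i, Group (G i)] [∀ i, DecidableEq (G i)]
    (E : Set ι)
    (hfree : ∀ j ∉ E, Nonempty (G j ≃* Multiplicative ℤ))
    (i₀ : ι) (hi₀ : i₀ ∈ E)
    (φ : CoprodI G ≃* CoprodI G)
    (hconj : ∀ i ∈ E, ∃ x : CoprodI G, ∀ g : G i, ∃ h : G i,
        φ (CoprodI.of g) = x * CoprodI.of h * x⁻¹)
    (hinv : ∀ w ∈ (⨆ j ∈ {j : ι | j ≠ i₀},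
        (CoprodI.of : G j →* CoprodI G).range),
        φ w ∈ (⨆ j ∈ {j : ι | j ≠ i₀},
        (CoprodI.of : G j →* CoprodI G).range)) :
    ∀ g : G i₀, lettersFrom i₀ (φ (CoprodI.of g)) ≤ 1 :=
  normal_form_of_image_of_elliptic_letter_general E i₀ hi₀ φ hconj hinv
end

section
/- For every automorphism α of G₁ with α(g₁) = g₁, the automorphism ψ_α of G determined by ψ_α(g) = α(g) for all g ∈ G₁, ψ_α(a) = a, and ψ_α(b) = b commutes with φ in the automorphism group of G, i.e., ψ_α ∘ φ = φ ∘ ψ_α. -/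
open Monoid

/-- Let `G = G₁ ∗ F₂` with `F₂` free on `a`, `b`, let `g₁ ∈ G₁` be nontrivial, and let
`φ` be the automorphism of `G` given by `g ↦ g` on `G₁`, `a ↦ b g₁`, `b ↦ a b`.
If `α` is an automorphism of `G₁` fixing `g₁`, then the automorphism `ψ` of `G`
determined by `g ↦ α g` on `G₁`, `a ↦ a`, `b ↦ b` commutes with `φ`. -/
theorem commutes_with_iwip_of_factor_aut_fixing
    {G₁ : Type*} [Group G₁] (g₁ : G₁) (hg₁ : g₁ ≠ 1)
    (a b : Coprod G₁ (FreeGroup Bool))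
    (ha : a = Coprod.inr (FreeGroup.of false))
    (hb : b = Coprod.inr (FreeGroup.of true))
    (φ : MulAut (Coprod G₁ (FreeGroup Bool)))
    (hφG₁ : ∀ g : G₁, φ (Coprod.inl g) = Coprod.inl g)
    (hφa : φ a = b * Coprod.inl g₁)
    (hφb : φ b = a * b)
    (α : MulAut G₁) (hα : α g₁ = g₁)
    (ψ : MulAut (Coprod G₁ (FreeGroup Bool)))
    (hψG₁ : ∀ g : G₁, ψ (Coprod.inl g) = Coprod.inl (α g))
    (hψa : ψ a = a) (hψb : ψ b = b) :
    ψ * φ = φ * ψ := by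
  have key : (ψ.toMonoidHom.comp φ.toMonoidHom)
      = (φ.toMonoidHom.comp ψ.toMonoidHom) := by
    apply Coprod.hom_ext
    · ext g
      simp [hψG₁, hφG₁]
    · apply FreeGroup.ext_hom
      intro x
      cases x
      · show ψ (φ (Coprod.inr (FreeGroup.of false)))
            = φ (ψ (Coprod.inr (FreeGroup.of false)))
        rw [← ha, hφa, hψa, hφa, map_mul, hψb, hψG₁, hα]
      · show ψ (φ (Coprod.inr (FreeGroup.of true)))
            = φ (ψ (Coprod.inr (FreeGroup.of true)))
        rw [← hb, hφb, hψb, hφb, map_mul, hψa, hψb]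
  ext x
  exact DFunLike.congr_fun key x
end

section
/- The assignment α ↦ ψ_α, sending an automorphism α of G₁ fixing g₁ to the automorphism ψ_α of G determined by ψ_α(g) = α(g) for g ∈ G₁, ψ_α(a) = a, ψ_α(b) = b, is an injective group homomorphism from the stabiliser subgroup {α ∈ Aut(G₁) : α(g₁) = g₁} of Aut(G₁) into the centraliser of φ in Aut(G). In particular, the centraliser of φ in Aut(G) contains a subgroup isomorphic to the subgroup of Aut(G₁) consisting of the automorphisms fixing g₁. -/
open Monoid

private lemma coprod_mulaut_ext {G₁ : Type*} [Group G₁]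
    (f g : MulAut (Coprod G₁ (FreeGroup Bool)))
    (h1 : ∀ x : G₁, f (Coprod.inl x) = g (Coprod.inl x))
    (h2 : f (Coprod.inr (FreeGroup.of false)) = g (Coprod.inr (FreeGroup.of false)))
    (h3 : f (Coprod.inr (FreeGroup.of true)) = g (Coprod.inr (FreeGroup.of true))) :
    f = g := by
  have : (f : Coprod G₁ (FreeGroup Bool) →* Coprod G₁ (FreeGroup Bool)) = g := by
    apply Coprod.hom_ext
    · ext x; exact h1 x
    · apply FreeGroup.ext_hom
      intro c
      cases c
      · exact h2
      · exact h3
    -- FreeGroup hom ext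
  exact MulEquiv.toMonoidHom_injective this

/-- Let `G = G₁ ∗ F₂` with `F₂` free on `a`, `b`, let `g₁ ∈ G₁` be nontrivial, and let
`φ` be the automorphism of `G` given by `g ↦ g` on `G₁`, `a ↦ b g₁`, `b ↦ a b`.
The assignment `α ↦ ψ_α`, where `ψ_α` is the automorphism of `G` determined by
`g ↦ α g` on `G₁`, `a ↦ a`, `b ↦ b`, restricts to an injective group homomorphism
from the stabiliser `{α ∈ Aut(G₁) : α g₁ = g₁}` into the centraliser of `φ` in
`Aut(G)`. -/
theorem stabilizer_embeds_in_centralizer_of_iwip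
    {G₁ : Type*} [Group G₁] (g₁ : G₁) (hg₁ : g₁ ≠ 1)
    (a b : Coprod G₁ (FreeGroup Bool))
    (ha : a = Coprod.inr (FreeGroup.of false))
    (hb : b = Coprod.inr (FreeGroup.of true))
    (φ : MulAut (Coprod G₁ (FreeGroup Bool)))
    (hφG₁ : ∀ g : G₁, φ (Coprod.inl g) = Coprod.inl g)
    (hφa : φ a = b * Coprod.inl g₁)
    (hφb : φ b = a * b)
    (Ψ : MulAut G₁ → MulAut (Coprod G₁ (FreeGroup Bool)))
    (hΨG₁ : ∀ (α : MulAut G₁) (g : G₁), Ψ α (Coprod.inl g) = Coprod.inl (α g))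
    (hΨa : ∀ α : MulAut G₁, Ψ α a = a)
    (hΨb : ∀ α : MulAut G₁, Ψ α b = b) :
    ∃ Θ : MulAction.stabilizer (MulAut G₁) g₁ →*
        Subgroup.centralizer ({φ} : Set (MulAut (Coprod G₁ (FreeGroup Bool)))),
      Function.Injective Θ ∧
      ∀ α : MulAction.stabilizer (MulAut G₁) g₁,
        (Θ α : MulAut (Coprod G₁ (FreeGroup Bool))) = Ψ α := by
  -- membership in the centralizer
  have hmem : ∀ α : MulAction.stabilizer (MulAut G₁) g₁,
      Ψ (α : MulAut G₁) ∈ Subgroup.centralizer ({φ} : Set (MulAut (Coprod G₁ (FreeGroup Bool)))) := by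
    intro α
    rw [Subgroup.mem_centralizer_iff]
    intro h hh
    rcases hh with rfl
    have hα : (α : MulAut G₁) g₁ = g₁ := α.2
    apply coprod_mulaut_ext
    · intro x
      show h (Ψ (α : MulAut G₁) (Coprod.inl x)) = Ψ (α : MulAut G₁) (h (Coprod.inl x))
      rw [hΨG₁, hφG₁, hφG₁, hΨG₁]
    · show h (Ψ (α : MulAut G₁) (Coprod.inr (FreeGroup.of false)))
        = Ψ (α : MulAut G₁) (h (Coprod.inr (FreeGroup.of false)))
      rw [← ha, hΨa, hφa, map_mul, hΨb, hΨG₁, hα]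
    · show h (Ψ (α : MulAut G₁) (Coprod.inr (FreeGroup.of true)))
        = Ψ (α : MulAut G₁) (h (Coprod.inr (FreeGroup.of true)))
      rw [← hb, hΨb, hφb, map_mul, hΨa, hΨb]
  refine ⟨{ toFun := fun α => ⟨Ψ (α : MulAut G₁), hmem α⟩, map_one' := ?_, map_mul' := ?_ }, ?_, ?_⟩
  · ext1
    apply coprod_mulaut_ext
    · intro x; simp [hΨG₁]
    · rw [← ha]; simp [hΨa]
    · rw [← hb]; simp [hΨb]
  · intro α β
    ext1
    apply coprod_mulaut_ext
    · intro x
      show Ψ ((α : MulAut G₁) * β) (Coprod.inl x)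
        = Ψ (α : MulAut G₁) (Ψ (β : MulAut G₁) (Coprod.inl x))
      rw [hΨG₁, hΨG₁, hΨG₁]; rfl
    · show Ψ ((α : MulAut G₁) * β) (Coprod.inr (FreeGroup.of false))
        = Ψ (α : MulAut G₁) (Ψ (β : MulAut G₁) (Coprod.inr (FreeGroup.of false)))
      rw [← ha, hΨa, hΨa, hΨa]
    · show Ψ ((α : MulAut G₁) * β) (Coprod.inr (FreeGroup.of true))
        = Ψ (α : MulAut G₁) (Ψ (β : MulAut G₁) (Coprod.inr (FreeGroup.of true)))
      rw [← hb, hΨb, hΨb, hΨb]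
  · intro α β h
    have h' : Ψ (α : MulAut G₁) = Ψ (β : MulAut G₁) := congrArg (fun x => (x : _)) (Subtype.ext_iff.mp h)
    ext1
    apply MulEquiv.toMonoidHom_injective
    ext x
    have := congrArg (fun f : MulAut (Coprod G₁ (FreeGroup Bool)) => f (Coprod.inl x)) h'
    simp only [hΨG₁] at this
    exact Coprod.inl_injective this
  · intro α; rfl
end
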